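/- If a group G endowed with a group coarse structure 𝓔_𝓘 (for an invariant group bornology 𝓘) is maximal as a coarse space, then the set of squares {g² : g ∈ G} is bounded, i.e., {g² : g ∈ G} ∈ 𝓘. -/

import Mathlib

open Pointwise

def IsIdeal {X : Type*} (I : Set (Set X)) : Prop :=
  ∅ ∈ I ∧ (∀ A ∈ I, ∀ B : Set X, B ⊆ A → B ∈ I) ∧ (∀ A ∈ I, ∀ B ∈ I, A ∪ B ∈ I)

def IsBornology {X : Type*} (B : Set (Set X)) : Prop :=
  IsIdeal B ∧ (∀ A : Set X, A.Finite → A ∈ B) ∧ ⋃₀ B = Set.univ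

def IsGroupBornology {G : Type*} [Group G] (I : Set (Set G)) : Prop :=
  IsBornology I ∧ ∀ A ∈ I, ∀ B ∈ I, A * B⁻¹ ∈ I

def relComp {X : Type*} (ε δ : Set (X × X)) : Set (X × X) :=
  {p | ∃ y, (p.1, y) ∈ ε ∧ (y, p.2) ∈ δ}

def relInv {X : Type*} (ε : Set (X × X)) : Set (X × X) :=
  {p | (p.2, p.1) ∈ ε}

def IsBallStructure {X : Type*} (E : Set (Set (X × X))) : Prop :=
  (∀ ε ∈ E, {p : X × X | p.1 = p.2} ⊆ ε) ∧
  (∀ ε ∈ E, ∀ δ ∈ E, ∃ lam ∈ E, relComp ε (relInv δ) ⊆ lam) ∧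
  ⋃₀ E = Set.univ

def IsCoarseStructure {X : Type*} (E : Set (Set (X × X))) : Prop :=
  IsBallStructure E ∧
  ∀ ε ∈ E, ∀ δ : Set (X × X), {p : X × X | p.1 = p.2} ⊆ δ → δ ⊆ ε → δ ∈ E

def ball {X : Type*} (ε : Set (X × X)) (x : X) : Set X :=
  {y | (x, y) ∈ ε}

def IsBoundedIn {X : Type*} (E : Set (Set (X × X))) (B : Set X) : Prop :=
  B = ∅ ∨ ∃ x : X, ∃ ε ∈ E, B ⊆ ball ε x

/-- The entourage `ε_A = {(x,y) : y ∈ {x} ∪ Ax}` determined by `A ⊆ G`. -/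
def entOf {G : Type*} [Group G] (A : Set G) : Set (G × G) :=
  {p | p.2 = p.1 ∨ ∃ a ∈ A, p.2 = a * p.1}

/-- The coarse structure `𝓔_𝓘` on a group determined by a group bornology `𝓘`. -/
def EI {G : Type*} [Group G] (I : Set (Set G)) : Set (Set (G × G)) :=
  {δ | {p : G × G | p.1 = p.2} ⊆ δ ∧ ∃ A ∈ I, δ ⊆ entOf A}

def IsInvariantGroupBornology {G : Type*} [Group G] (I : Set (Set G)) : Prop :=
  IsGroupBornology I ∧ ∀ A ∈ I, {x : G | ∃ g : G, ∃ a ∈ A, x = g⁻¹ * a * g} ∈ I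

/-!
Let `𝓔` consist of the relations contained in `{(x, y) : y ∈ A x A ∪ A x⁻¹ A}` for some `A ∈ 𝓘`.
It is a coarse structure containing `𝓔_𝓘` in which `G` is still unbounded, since the ball around `x`
lies in `A x A ∪ A x⁻¹ A ∈ 𝓘`. By maximality `𝓔 = 𝓔_𝓘`, so the graph of inversion is an entourage
of `𝓔_𝓘`: there is `A ∈ 𝓘` with `g ∈ {g⁻¹} ∪ A g⁻¹` for all `g`, that is `g² ∈ A ∪ {1}`.
-/

namespace IsBornology

variable {X : Type*} {I : Set (Set X)}

theorem mem_of_subset (hI : IsBornology I) {A B : Set X} (hA : A ∈ I) (hBA : B ⊆ A) : B ∈ I :=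
  hI.1.2.1 A hA B hBA

theorem union_mem (hI : IsBornology I) {A B : Set X} (hA : A ∈ I) (hB : B ∈ I) : A ∪ B ∈ I :=
  hI.1.2.2 A hA B hB

theorem finite_mem (hI : IsBornology I) {A : Set X} (hA : A.Finite) : A ∈ I :=
  hI.2.1 A hA

end IsBornology

section

variable {G : Type*} [Group G] {I : Set (Set G)}

namespace IsGroupBornology

theorem inv_mem (hI : IsGroupBornology I) {A : Set G} (hA : A ∈ I) : A⁻¹ ∈ I := by
  simpa using hI.2 _ (hI.1.finite_mem (Set.finite_singleton 1)) A hA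

theorem mul_mem (hI : IsGroupBornology I) {A B : Set G} (hA : A ∈ I) (hB : B ∈ I) :
    A * B ∈ I := by
  simpa using hI.2 A hA _ (hI.inv_mem hB)

end IsGroupBornology

def entOfInv (A : Set G) : Set (G × G) :=
  {p | ∃ a ∈ A, ∃ b ∈ A, p.2 = a * p.1 * b ∨ p.2 = a * p.1⁻¹ * b}

@[simp]
theorem mk_mem_entOfInv {A : Set G} {x y : G} :
    (x, y) ∈ entOfInv A ↔ ∃ a ∈ A, ∃ b ∈ A, y = a * x * b ∨ y = a * x⁻¹ * b :=
  Iff.rfl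

def EIInv (I : Set (Set G)) : Set (Set (G × G)) :=
  {δ | {p : G × G | p.1 = p.2} ⊆ δ ∧ ∃ A ∈ I, δ ⊆ entOfInv A}

theorem entOfInv_mono {A B : Set G} (h : A ⊆ B) : entOfInv A ⊆ entOfInv B := by
  rintro p ⟨a, ha, b, hb, hp⟩
  exact ⟨a, h ha, b, h hb, hp⟩

theorem relInv_entOfInv_subset {A : Set G} (hA : ∀ a ∈ A, a⁻¹ ∈ A) :
    relInv (entOfInv A) ⊆ entOfInv A := by
  rintro ⟨x, y⟩ hyx
  obtain ⟨a, ha, b, hb, rfl | rfl⟩ := (mk_mem_entOfInv (x := y) (y := x)).1 hyx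
  · exact ⟨a⁻¹, hA a ha, b⁻¹, hA b hb, Or.inl (by group)⟩
  · exact ⟨b, hb, a, ha, Or.inr (by group)⟩

theorem relComp_entOfInv_subset {A : Set G} (hA : ∀ a ∈ A, a⁻¹ ∈ A) :
    relComp (entOfInv A) (entOfInv A) ⊆ entOfInv (A * A) := by
  rintro ⟨x, z⟩ ⟨y, ⟨a, ha, b, hb, hy⟩, ⟨c, hc, d, hd, hz⟩⟩
  dsimp only at hy hz
  have hca := Set.mul_mem_mul hc ha
  have hbd := Set.mul_mem_mul hb hd
  have hcb := Set.mul_mem_mul hc (hA b hb)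
  have had := Set.mul_mem_mul (hA a ha) hd
  rcases hy with rfl | rfl <;> rcases hz with rfl | rfl
  · exact ⟨_, hca, _, hbd, Or.inl (by group)⟩
  · exact ⟨_, hcb, _, had, Or.inr (by group)⟩
  · exact ⟨_, hca, _, hbd, Or.inr (by group)⟩
  · exact ⟨_, hcb, _, had, Or.inl (by group)⟩

theorem entOfInv_mem_EIInv {A : Set G} (hA : A ∈ I) (h1 : (1 : G) ∈ A) :
    entOfInv A ∈ EIInv I :=
  ⟨fun p hp => ⟨1, h1, 1, h1, Or.inl (by rw [mul_one, one_mul]; exact hp.symm)⟩, A, hA, subset_rfl⟩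

theorem isCoarseStructure_EIInv (hI : IsGroupBornology I) : IsCoarseStructure (EIInv I) := by
  refine ⟨⟨fun ε hε => hε.1, ?_, ?_⟩, ?_⟩
  · rintro ε ⟨hεd, A, hA, hεA⟩ δ ⟨hδd, C, hC, hδC⟩
    set K := (A ∪ C) ∪ (A ∪ C)⁻¹
    have hK : K ∈ I := hI.1.union_mem (hI.1.union_mem hA hC) (hI.inv_mem (hI.1.union_mem hA hC))
    have hKsymm : ∀ k ∈ K, k⁻¹ ∈ K := by
      rintro k (hk | hk)
      · exact Or.inr (Set.inv_mem_inv.mpr hk)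
      · exact Or.inl hk
    have hAK : entOfInv A ⊆ entOfInv K :=
      entOfInv_mono (Set.subset_union_left.trans Set.subset_union_left)
    have hCK : entOfInv C ⊆ entOfInv K :=
      entOfInv_mono (Set.subset_union_right.trans Set.subset_union_left)
    refine ⟨relComp ε (relInv δ), ⟨?_, K * K, hI.mul_mem hK hK, ?_⟩, subset_rfl⟩
    · rintro ⟨x, y⟩ (rfl : x = y)
      exact ⟨x, hεd rfl, hδd rfl⟩
    · rintro p ⟨y, hxy, hyz⟩
      exact relComp_entOfInv_subset hKsymm
        ⟨y, hAK (hεA hxy), relInv_entOfInv_subset hKsymm (hCK (hδC hyz))⟩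
  · refine Set.eq_univ_of_forall fun ⟨x, y⟩ => ⟨entOfInv {1, y * x⁻¹}, ?_, ?_⟩
    · exact entOfInv_mem_EIInv (hI.1.finite_mem (Set.toFinite _)) (by simp)
    · exact ⟨y * x⁻¹, by simp, 1, by simp, Or.inl (by group)⟩
  · rintro ε ⟨-, A, hA, hεA⟩ δ hδd hδε
    exact ⟨hδd, A, hA, hδε.trans hεA⟩

theorem entOf_subset_entOfInv (A : Set G) : entOf A ⊆ entOfInv (A ∪ {1}) := by
  rintro p (h | ⟨a, ha, h⟩)
  · exact ⟨1, Or.inr rfl, 1, Or.inr rfl, Or.inl (by simp [h])⟩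
  · exact ⟨a, Or.inl ha, 1, Or.inr rfl, Or.inl (by simp [h])⟩

theorem EI_subset_EIInv (hI : IsBornology I) : EI I ⊆ EIInv I :=
  fun _ ⟨hδd, A, hA, hδA⟩ =>
    ⟨hδd, A ∪ {1}, hI.union_mem hA (hI.finite_mem (Set.finite_singleton 1)),
      hδA.trans (entOf_subset_entOfInv A)⟩

theorem ball_entOfInv_mem (hI : IsGroupBornology I) {A : Set G} (hA : A ∈ I) (x : G) :
    ball (entOfInv A) x ∈ I := by
  have hAxA : ∀ u : G, A * {u} * A ∈ I := fun u =>
    hI.mul_mem (hI.mul_mem hA (hI.1.finite_mem (Set.finite_singleton u))) hA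
  refine hI.1.mem_of_subset (hI.1.union_mem (hAxA x) (hAxA x⁻¹)) ?_
  intro y hy
  obtain ⟨a, ha, b, hb, rfl | rfl⟩ := mk_mem_entOfInv.1 hy
  · exact Or.inl (Set.mul_mem_mul (Set.mul_mem_mul ha rfl) hb)
  · exact Or.inr (Set.mul_mem_mul (Set.mul_mem_mul ha rfl) hb)

theorem univ_mem_of_isBoundedIn_EIInv (hI : IsGroupBornology I)
    (h : IsBoundedIn (EIInv I) Set.univ) : Set.univ ∈ I := by
  obtain h | ⟨x, ε, ⟨-, A, hA, hεA⟩, hball⟩ := h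
  · exact absurd h Set.univ_nonempty.ne_empty
  · exact hI.1.mem_of_subset (ball_entOfInv_mem hI hA x) fun y hy => hεA (hball hy)

theorem sq_mem_of_entOfInv_one_mem_EI (hI : IsBornology I) (h : entOfInv {1} ∈ EI I) :
    {x : G | ∃ g : G, x = g ^ 2} ∈ I := by
  obtain ⟨-, A, hA, hsub⟩ := h
  refine hI.mem_of_subset (hI.union_mem hA (hI.finite_mem (Set.finite_singleton 1))) ?_
  rintro _ ⟨g, rfl⟩
  have hg : (g⁻¹, g) ∈ entOfInv {1} := ⟨1, rfl, 1, rfl, Or.inr (by simp)⟩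
  rcases hsub hg with hgg | ⟨a, ha, hga⟩
  · exact Or.inr (by simp [pow_two, mul_eq_one_iff_eq_inv.mpr hgg])
  · exact Or.inl (by rwa [pow_two, eq_mul_inv_iff_mul_eq.mp hga])

end

theorem stmt15 {G : Type*} [Group G] (𝓘 : Set (Set G))
    (h : IsInvariantGroupBornology 𝓘)
    (hub : (Set.univ : Set G) ∉ 𝓘)
    (hmax : ∀ 𝓔' : Set (Set (G × G)), IsCoarseStructure 𝓔' → EI 𝓘 ⊂ 𝓔' →
      IsBoundedIn 𝓔' (Set.univ : Set G)) :
    {x : G | ∃ g : G, x = g ^ 2} ∈ 𝓘 := by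
  have hI := h.1
  by_contra hsq
  have hstrict : EI 𝓘 ⊂ EIInv 𝓘 :=
    ⟨EI_subset_EIInv hI.1, fun hle => hsq (sq_mem_of_entOfInv_one_mem_EI hI.1
      (hle (entOfInv_mem_EIInv (hI.1.finite_mem (Set.finite_singleton 1)) rfl)))⟩
  exact hub (univ_mem_of_isBoundedIn_EIInv hI (hmax _ (isCoarseStructure_EIInv hI) hstrict))
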